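/- Let b, β > 0 be real numbers with bβ > 1. Then there exists a real number a > 0 such that: for every q with |q| > a, the equation p = tanh(β(q + bp)) has exactly one real solution p, and for every q with |q| < a, it has exactly three real solutions. -/

import Mathlib

/-!
Write `x = β (q + b p)` for the effective field. Then `p = tanh x` solves the self-consistency
equation exactly when `q = x / β - b tanh x`, so the solutions `p` correspond, through the strictly
increasing map `tanh`, to the solutions `x` of this equation. The right-hand side is an odd function
of `x`, tending to `±∞`, with derivative `(cosh² x - bβ) / (β cosh² x)`. As `bβ > 1`, it increases
up to `-x₀`, decreases on `[-x₀, x₀]` and increases again, where `cosh x₀ = √(bβ)`. Hence a level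
`q` is attained once if `|q|` exceeds the fold value `a > 0` taken at `-x₀`, and three times if
`|q| < a`.
-/

open Real Set Filter

structure IsNShaped (f : ℝ → ℝ) (u v : ℝ) : Prop where
  lt : u < v
  continuous : Continuous f
  strictMonoOn_Iic : StrictMonoOn f (Iic u)
  strictAntiOn_Icc : StrictAntiOn f (Icc u v)
  strictMonoOn_Ici : StrictMonoOn f (Ici v)
  tendsto_atBot : Tendsto f atBot atBot
  tendsto_atTop : Tendsto f atTop atTop

def ExistsExactlyThree {α : Type*} [LT α] (P : α → Prop) : Prop :=
  ∃ x₁ x₂ x₃, x₁ < x₂ ∧ x₂ < x₃ ∧ P x₁ ∧ P x₂ ∧ P x₃ ∧ ∀ x, P x → x = x₁ ∨ x = x₂ ∨ x = x₃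

namespace IsNShaped

variable {f : ℝ → ℝ} {u v q x : ℝ}

theorem apply_le_localMax (hf : IsNShaped f u v) (hx : x ≤ v) : f x ≤ f u := by
  rcases le_total x u with hxu | hux
  · exact hf.strictMonoOn_Iic.monotoneOn hxu self_mem_Iic hxu
  · exact hf.strictAntiOn_Icc.antitoneOn (left_mem_Icc.2 hf.lt.le) ⟨hux, hx⟩ hux

theorem localMin_le_apply (hf : IsNShaped f u v) (hx : u ≤ x) : f v ≤ f x := by
  rcases le_total v x with hvx | hxv
  · exact hf.strictMonoOn_Ici.monotoneOn self_mem_Ici hvx hvx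
  · exact hf.strictAntiOn_Icc.antitoneOn ⟨hx, hxv⟩ (right_mem_Icc.2 hf.lt.le) hxv

theorem exists_lt_apply_eq (hf : IsNShaped f u v) (hq : q < f u) : ∃ x < u, f x = q := by
  obtain ⟨y, hyq, hyu⟩ :=
    ((hf.tendsto_atBot.eventually_lt_atBot q).and (eventually_lt_atBot u)).exists
  obtain ⟨x, hx, hxq⟩ := intermediate_value_Ioo hyu.le hf.continuous.continuousOn ⟨hyq, hq⟩
  exact ⟨x, hx.2, hxq⟩

theorem exists_gt_apply_eq (hf : IsNShaped f u v) (hq : f v < q) : ∃ x > v, f x = q := by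
  obtain ⟨y, hyq, hvy⟩ :=
    ((hf.tendsto_atTop.eventually_gt_atTop q).and (eventually_gt_atTop v)).exists
  obtain ⟨x, hx, hxq⟩ := intermediate_value_Ioo hvy.le hf.continuous.continuousOn ⟨hq, hyq⟩
  exact ⟨x, hx.1, hxq⟩

theorem existsUnique_of_localMax_lt (hf : IsNShaped f u v) (hq : f u < q) : ∃! x, f x = q := by
  obtain ⟨x, hvx, hxq⟩ := hf.exists_gt_apply_eq ((hf.apply_le_localMax le_rfl).trans_lt hq)
  refine ⟨x, hxq, fun y hyq => hf.strictMonoOn_Ici.injOn ?_ hvx.le (hyq.trans hxq.symm)⟩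
  exact le_of_not_gt fun hyv => (hf.apply_le_localMax hyv.le).not_gt (hyq ▸ hq)

theorem existsUnique_of_lt_localMin (hf : IsNShaped f u v) (hq : q < f v) : ∃! x, f x = q := by
  obtain ⟨x, hxu, hxq⟩ := hf.exists_lt_apply_eq (hq.trans_le (hf.localMin_le_apply le_rfl))
  refine ⟨x, hxq, fun y hyq => hf.strictMonoOn_Iic.injOn ?_ hxu.le (hyq.trans hxq.symm)⟩
  exact le_of_not_gt fun huy => (hf.localMin_le_apply huy.le).not_gt (hyq ▸ hq)

theorem existsExactlyThree (hf : IsNShaped f u v) (hvq : f v < q) (hqu : q < f u) :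
    ExistsExactlyThree (f · = q) := by
  obtain ⟨x₁, hx₁, hx₁q⟩ := hf.exists_lt_apply_eq hqu
  obtain ⟨x₂, hx₂, hx₂q⟩ := intermediate_value_Ioo' hf.lt.le hf.continuous.continuousOn ⟨hvq, hqu⟩
  obtain ⟨x₃, hx₃, hx₃q⟩ := hf.exists_gt_apply_eq hvq
  refine ⟨x₁, x₂, x₃, hx₁.trans hx₂.1, hx₂.2.trans hx₃, hx₁q, hx₂q, hx₃q, fun x hxq => ?_⟩
  rcases le_total x u with hxu | hux
  · exact .inl (hf.strictMonoOn_Iic.injOn hxu hx₁.le (hxq.trans hx₁q.symm))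
  rcases le_total x v with hxv | hvx
  · exact .inr (.inl (hf.strictAntiOn_Icc.injOn ⟨hux, hxv⟩ (Ioo_subset_Icc_self hx₂)
      (hxq.trans hx₂q.symm)))
  · exact .inr (.inr (hf.strictMonoOn_Ici.injOn hvx hx₃.le (hxq.trans hx₃q.symm)))

end IsNShaped

theorem ExistsUnique.of_iff_exists_image {α β : Type*} {P : α → Prop} {Q : β → Prop} {g : α → β}
    (hQ : ∀ p, Q p ↔ ∃ x, P x ∧ g x = p) (h : ∃! x, P x) : ∃! p, Q p := by
  obtain ⟨x, hx, hxu⟩ := h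
  refine ⟨g x, (hQ _).2 ⟨x, hx, rfl⟩, fun p hp => ?_⟩
  obtain ⟨y, hy, rfl⟩ := (hQ p).1 hp
  rw [hxu y hy]

theorem ExistsExactlyThree.of_strictMono_image {α β : Type*} [LinearOrder α] [Preorder β]
    {P : α → Prop} {Q : β → Prop} {g : α → β} (hg : StrictMono g)
    (hQ : ∀ p, Q p ↔ ∃ x, P x ∧ g x = p) (h : ExistsExactlyThree P) : ExistsExactlyThree Q := by
  obtain ⟨x₁, x₂, x₃, h₁₂, h₂₃, hx₁, hx₂, hx₃, hall⟩ := h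
  refine ⟨g x₁, g x₂, g x₃, hg h₁₂, hg h₂₃, (hQ _).2 ⟨x₁, hx₁, rfl⟩, (hQ _).2 ⟨x₂, hx₂, rfl⟩,
    (hQ _).2 ⟨x₃, hx₃, rfl⟩, fun p hp => ?_⟩
  obtain ⟨y, hy, rfl⟩ := (hQ p).1 hp
  rcases hall y hy with rfl | rfl | rfl <;> simp

theorem Real.hasDerivAt_tanh (x : ℝ) : HasDerivAt tanh (1 / cosh x ^ 2) x := by
  have h := (hasDerivAt_sinh x).div (hasDerivAt_cosh x) (cosh_pos x).ne'
  rw [← sq, ← sq, cosh_sq_sub_sinh_sq] at h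
  rwa [show tanh = sinh / cosh from funext tanh_eq_sinh_div_cosh]

theorem Real.strictMono_tanh : StrictMono tanh :=
  strictMono_of_deriv_pos fun x => (hasDerivAt_tanh x).deriv ▸ by positivity

theorem Real.lt_cosh_iff {c x : ℝ} (hc : 1 ≤ c) : c < cosh x ↔ arcosh c < |x| := by
  rw [← abs_of_nonneg (arcosh_nonneg hc), ← cosh_lt_cosh, cosh_arcosh hc]

theorem Real.cosh_lt_iff {c x : ℝ} (hc : 1 ≤ c) : cosh x < c ↔ |x| < arcosh c := by
  rw [← abs_of_nonneg (arcosh_nonneg hc), ← cosh_lt_cosh, cosh_arcosh hc]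

namespace MeanFieldIsing

noncomputable def externalField (b β x : ℝ) : ℝ := x / β - b * tanh x

variable {b β : ℝ}

theorem selfConsistent_iff (hβ : β ≠ 0) (p q : ℝ) :
    p = tanh (β * (q + b * p)) ↔ ∃ x, externalField b β x = q ∧ tanh x = p := by
  constructor
  · intro hp
    refine ⟨β * (q + b * p), ?_, hp.symm⟩
    rw [externalField, ← hp]
    field_simp
    ring
  · rintro ⟨x, rfl, rfl⟩
    congr 1
    rw [externalField]
    field_simp
    ring

theorem externalField_zero : externalField b β 0 = 0 := by
  simp [externalField]

theorem externalField_neg (x : ℝ) : externalField b β (-x) = -externalField b β x := by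
  simp only [externalField, tanh_neg]
  ring

theorem hasDerivAt_externalField (hβ : β ≠ 0) (x : ℝ) :
    HasDerivAt (externalField b β) ((cosh x ^ 2 - b * β) / (β * cosh x ^ 2)) x := by
  have := (cosh_pos x).ne'
  exact (((hasDerivAt_id' x).div_const β).sub ((hasDerivAt_tanh x).const_mul b)).congr_deriv
    (by field_simp)

theorem continuous_externalField (hβ : β ≠ 0) : Continuous (externalField b β) :=
  continuous_iff_continuousAt.2 fun x => (hasDerivAt_externalField hβ x).continuousAt

theorem deriv_externalField_pos (hβ : 0 < β) (hbβ : 1 ≤ b * β) {x : ℝ}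
    (hx : arcosh √(b * β) < |x|) : 0 < deriv (externalField b β) x := by
  rw [(hasDerivAt_externalField hβ.ne' x).deriv]
  have h := (lt_cosh_iff (one_le_sqrt.2 hbβ)).2 hx
  rw [sqrt_lt' (cosh_pos x)] at h
  exact div_pos (sub_pos.2 h) (by positivity)

theorem deriv_externalField_neg (hβ : 0 < β) (hbβ : 1 ≤ b * β) {x : ℝ}
    (hx : |x| < arcosh √(b * β)) : deriv (externalField b β) x < 0 := by
  rw [(hasDerivAt_externalField hβ.ne' x).deriv]
  have h := (cosh_lt_iff (one_le_sqrt.2 hbβ)).2 hx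
  rw [lt_sqrt (cosh_pos x).le] at h
  exact div_neg_of_neg_of_pos (sub_neg.2 h) (by positivity)

theorem tendsto_externalField_atTop (hb : 0 < b) (hβ : 0 < β) :
    Tendsto (externalField b β) atTop atTop := by
  refine tendsto_atTop_mono (fun x => ?_)
    (tendsto_atTop_add_const_right _ (-b) (tendsto_id.atTop_div_const hβ))
  have := mul_le_mul_of_nonneg_left (tanh_lt_one x).le hb.le
  simp only [externalField, id]
  linarith

theorem tendsto_externalField_atBot (hb : 0 < b) (hβ : 0 < β) :
    Tendsto (externalField b β) atBot atBot := by
  refine tendsto_atBot_mono (fun x => ?_)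
    (tendsto_atBot_add_const_right _ b (tendsto_id.atBot_div_const hβ))
  have := mul_le_mul_of_nonneg_left (neg_one_lt_tanh x).le hb.le
  simp only [externalField, id]
  linarith

theorem isNShaped_externalField (hb : 0 < b) (hβ : 0 < β) (hbβ : 1 < b * β) :
    IsNShaped (externalField b β) (-arcosh √(b * β)) (arcosh √(b * β)) where
  lt := neg_lt_self (arcosh_pos (by rwa [lt_sqrt zero_le_one, one_pow]))
  continuous := continuous_externalField hβ.ne'
  strictMonoOn_Iic := by
    refine strictMonoOn_of_deriv_pos (convex_Iic _) (continuous_externalField hβ.ne').continuousOn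
      fun x hx => deriv_externalField_pos hβ hbβ.le ?_
    rw [interior_Iic, mem_Iio] at hx
    rw [abs_of_neg (hx.trans_le (neg_nonpos.2 (arcosh_nonneg (one_le_sqrt.2 hbβ.le))))]
    linarith
  strictAntiOn_Icc := by
    refine strictAntiOn_of_deriv_neg (convex_Icc _ _) (continuous_externalField hβ.ne').continuousOn
      fun x hx => deriv_externalField_neg hβ hbβ.le ?_
    rw [interior_Icc] at hx
    exact abs_lt.2 hx
  strictMonoOn_Ici := by
    refine strictMonoOn_of_deriv_pos (convex_Ici _) (continuous_externalField hβ.ne').continuousOn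
      fun x hx => deriv_externalField_pos hβ hbβ.le ?_
    rw [interior_Ici, mem_Ioi] at hx
    rwa [abs_of_pos ((arcosh_nonneg (one_le_sqrt.2 hbβ.le)).trans_lt hx)]
  tendsto_atBot := tendsto_externalField_atBot hb hβ
  tendsto_atTop := tendsto_externalField_atTop hb hβ

end MeanFieldIsing

open MeanFieldIsing in
/-- Case B (`bβ > 1`) of the mean field Ising model: there is `a > 0` such that
the self-consistency equation `p = tanh (β (q + b p))` has exactly one real
solution when `|q| > a`, and exactly three real solutions when `|q| < a`. -/
theorem self_consistency_phase_transition (b β : ℝ) (hb : 0 < b) (hβ : 0 < β)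
    (h : 1 < b * β) :
    ∃ a : ℝ, 0 < a ∧
      (∀ q : ℝ, a < |q| → ∃! p : ℝ, p = Real.tanh (β * (q + b * p))) ∧
      (∀ q : ℝ, |q| < a → ∃ p₁ p₂ p₃ : ℝ, p₁ < p₂ ∧ p₂ < p₃ ∧
        p₁ = Real.tanh (β * (q + b * p₁)) ∧
        p₂ = Real.tanh (β * (q + b * p₂)) ∧
        p₃ = Real.tanh (β * (q + b * p₃)) ∧
        ∀ p : ℝ, p = Real.tanh (β * (q + b * p)) → p = p₁ ∨ p = p₂ ∨ p = p₃) := by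
  have hN := isNShaped_externalField hb hβ h
  set x₀ := arcosh √(b * β)
  have hx₀ : 0 < x₀ := by linarith [hN.lt]
  have hfold : externalField b β x₀ = -externalField b β (-x₀) := by
    rw [externalField_neg, neg_neg]
  refine ⟨externalField b β (-x₀), ?_, fun q hq => ?_, fun q hq => ?_⟩
  · rw [← externalField_zero (b := b) (β := β)]
    exact hN.strictAntiOn_Icc (left_mem_Icc.2 hN.lt.le) ⟨by linarith, hx₀.le⟩ (neg_lt_zero.2 hx₀)
  · refine ExistsUnique.of_iff_exists_image (selfConsistent_iff hβ.ne' · q) ?_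
    rcases lt_abs.1 hq with hq | hq
    · exact hN.existsUnique_of_localMax_lt hq
    · exact hN.existsUnique_of_lt_localMin (by linarith)
  · obtain ⟨hq₁, hq₂⟩ := abs_lt.1 hq
    exact ExistsExactlyThree.of_strictMono_image strictMono_tanh (selfConsistent_iff hβ.ne' · q)
      (hN.existsExactlyThree (by linarith) hq₂)
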